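/- Fix integers k ≥ 0, j ≥ 0 and 0 ≤ i ≤ k + j. Let A_i be the following set of 2k+4j+3+i distinct lines of the real projective plane: the line z = 0; the lines x = s·z and y = s·z for each integer −j ≤ s ≤ k+j; and the lines x + y = (k−l+1)·z for each integer 1 ≤ l ≤ i. Let H be the line x + y = (k−i)·z (not a member of A_i). Then the set of intersection points {H ∩ K : K ∈ A_i} has exactly k+2j+2+i elements. (Equivalently, the number of triple points satisfies t_{A_i ∪ {H}, H} = k+2j+1, which yields the exact sequence 0 → T_{A_{i+1}} → T_{A_i} → O_H(−k−2j−1) → 0.) -/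

import Mathlib

noncomputable section

/-- The projective line `{a·x + b·y + c·z = 0}` regarded as the 2-dimensional subspace
of `ℝ³` cut out by the linear form with coefficients `a, b, c`. -/
def lineL (a b c : ℝ) : Submodule ℝ (Fin 3 → ℝ) :=
  LinearMap.ker
    ((a • LinearMap.proj 0 + b • LinearMap.proj 1 + c • LinearMap.proj 2 :
      (Fin 3 → ℝ) →ₗ[ℝ] ℝ))

/-- The grid arrangement: the line at infinity `z = 0` together with the lines
`x = s·z` and `y = s·z` for integers `-j ≤ s ≤ k+j`. -/
def gridLines (k j : ℕ) : Set (Submodule ℝ (Fin 3 → ℝ)) :=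
  {lineL 0 0 1} ∪
    {L | ∃ s : ℤ, -(j : ℤ) ≤ s ∧ s ≤ (k : ℤ) + j ∧
      (L = lineL 1 0 (-(s : ℝ)) ∨ L = lineL 0 1 (-(s : ℝ)))}

/-! Lines with coefficient vectors `f`, `g` and `f ⨯₃ g ≠ 0` are distinct and meet exactly in the
point `f ⨯₃ g`. Parametrise the affine points of `H : x + y = (k-i)·z` as `(t, k-i-t)`. The line
`x = s·z` meets `H` at `t = s` and `y = s·z` meets it at `t = k-i-s`, so the grid contributes the
integers `t ∈ [-j, k+j] ∪ [-i-j, k-i+j] = [-i-j, k+j]` (the intervals overlap as `i ≤ k+j`), while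
`z = 0` and the diagonals of `A_i`, all parallel to `H`, meet it at its point at infinity
`(1 : -1 : 0)`. -/

open Matrix Module Set Submodule

theorem mem_lineL {a b c : ℝ} {v : Fin 3 → ℝ} :
    v ∈ lineL a b c ↔ ![a, b, c] ⬝ᵥ v = 0 := by
  rw [vec3_dotProduct]
  simp [lineL]

theorem lineL_inf_lineL {a b c a' b' c' : ℝ} (h : ![a, b, c] ⨯₃ ![a', b', c'] ≠ 0) :
    lineL a b c ⊓ lineL a' b' c' = ℝ ∙ (![a, b, c] ⨯₃ ![a', b', c']) := by
  apply le_antisymm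
  · intro v hv
    rw [mem_inf, mem_lineL, mem_lineL] at hv
    have hwv : ![a, b, c] ⨯₃ ![a', b', c'] ⨯₃ v = 0 := by
      rw [cross_cross_eq_smul_sub_smul, hv.1, hv.2, zero_smul, zero_smul, sub_zero]
    rw [← not_ne_iff, crossProduct_ne_zero_iff_linearIndependent,
      LinearIndependent.pair_iff' h, not_forall_not] at hwv
    exact mem_span_singleton.2 hwv
  · rw [span_singleton_le_iff_mem, mem_inf, mem_lineL, mem_lineL]
    exact ⟨dot_self_cross _ _, dot_cross_self _ _⟩

theorem lineL_inf_lineL_eq_span_of_mem {a b c a' b' c' : ℝ} {p : Fin 3 → ℝ}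
    (h : ![a, b, c] ⨯₃ ![a', b', c'] ≠ 0) (hp : p ≠ 0) (hp₁ : p ∈ lineL a b c)
    (hp₂ : p ∈ lineL a' b' c') : lineL a b c ⊓ lineL a' b' c' = ℝ ∙ p := by
  have hmem := mem_inf.2 ⟨hp₁, hp₂⟩
  rw [lineL_inf_lineL h] at hmem ⊢
  obtain ⟨r, rfl⟩ := mem_span_singleton.1 hmem
  have hr : r ≠ 0 := by rintro rfl; simp at hp
  exact (span_singleton_smul_eq (IsUnit.mk0 r hr) _).symm

theorem finrank_lineL {a b c : ℝ} (h : ![a, b, c] ≠ 0) : finrank ℝ (lineL a b c) = 2 := by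
  have hφ : (a • LinearMap.proj 0 + b • LinearMap.proj 1 + c • LinearMap.proj 2 :
      Dual ℝ (Fin 3 → ℝ)) ≠ 0 := by
    intro h0
    have hmem : ![a, b, c] ∈ lineL a b c := by simp [lineL, h0]
    exact h (dotProduct_self_eq_zero.1 (mem_lineL.1 hmem))
  have := Dual.finrank_ker_add_one_of_ne_zero hφ
  rw [finrank_fin_fun] at this
  exact Nat.add_right_cancel this

theorem lineL_ne_lineL {a b c a' b' c' : ℝ} (h : ![a, b, c] ⨯₃ ![a', b', c'] ≠ 0) :
    lineL a b c ≠ lineL a' b' c' := by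
  intro heq
  have h₁ : finrank ℝ (lineL a b c) = 1 := by
    rw [← inf_of_le_left heq.le, lineL_inf_lineL h, finrank_span_singleton h]
  have h₀ : ![a, b, c] ≠ 0 := by rintro h0; simp [h0] at h
  rw [finrank_lineL h₀] at h₁
  omega

theorem lineL_injective {a b : ℝ} (h : a ≠ 0 ∨ b ≠ 0) : Function.Injective (lineL a b) := by
  intro c c' heq
  by_contra hne
  refine lineL_ne_lineL ?_ heq
  intro h0
  have h₀ := congrFun h0 0
  have h₁ := congrFun h0 1
  simp [cross_apply] at h₀ h₁
  rcases h with ha | hb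
  · exact hne (mul_left_cancel₀ ha (by linear_combination h₁))
  · exact hne (mul_left_cancel₀ hb (by linear_combination -h₀))

def diagonalPoint (m t : ℝ) : Submodule ℝ (Fin 3 → ℝ) := ℝ ∙ ![t, m - t, 1]

theorem diagonalPoint_injective (m : ℝ) : Function.Injective (diagonalPoint m) := by
  intro t t' h
  obtain ⟨r, hr⟩ := span_singleton_eq_span_singleton.1 h
  have h₀ := congrFun hr 0
  have h₂ := congrFun hr 2
  simp [Units.smul_def] at h₀ h₂
  simpa [h₂] using h₀

theorem diagonalPoint_ne (m t : ℝ) : diagonalPoint m t ≠ ℝ ∙ ![1, -1, 0] := by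
  intro h
  obtain ⟨r, hr⟩ := span_singleton_eq_span_singleton.1 h
  have h₂ := congrFun hr 2
  simp [Units.smul_def] at h₂

theorem lineL_one_one_inf_lineL_one_zero (m t : ℝ) :
    lineL 1 1 (-m) ⊓ lineL 1 0 (-t) = diagonalPoint m t :=
  lineL_inf_lineL_eq_span_of_mem (by simp [cross_apply]) (by simp)
    (by simp [mem_lineL]; ring) (by simp [mem_lineL])

theorem lineL_one_one_inf_lineL_zero_one {m s t : ℝ} (h : t + s = m) :
    lineL 1 1 (-m) ⊓ lineL 0 1 (-s) = diagonalPoint m t :=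
  lineL_inf_lineL_eq_span_of_mem (by simp [cross_apply]) (by simp)
    (by simp [mem_lineL]; ring) (by simp [mem_lineL]; linarith)

theorem lineL_one_one_inf_lineL_zero_zero_one (m : ℝ) :
    lineL 1 1 (-m) ⊓ lineL 0 0 1 = ℝ ∙ ![1, -1, 0] :=
  lineL_inf_lineL_eq_span_of_mem (by simp [cross_apply]) (by simp)
    (by simp [mem_lineL]) (by simp [mem_lineL])

theorem lineL_one_one_inf_lineL_one_one {m m' : ℝ} (h : m ≠ m') :
    lineL 1 1 (-m) ⊓ lineL 1 1 (-m') = ℝ ∙ ![1, -1, 0] :=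
  lineL_inf_lineL_eq_span_of_mem
    (by simp [cross_apply]; intro h' _; exact h (by linarith)) (by simp)
    (by simp [mem_lineL]) (by simp [mem_lineL])

theorem ncard_Icc_int (a b : ℤ) : (Icc a b).ncard = (b + 1 - a).toNat := by
  rw [← Finset.coe_Icc, ncard_coe_finset, Int.card_Icc]

theorem gridLines_eq (k j : ℕ) :
    gridLines k j = insert (lineL 0 0 1)
      ((fun s : ℤ => lineL 1 0 (-s)) '' Icc (-j) (k + j) ∪
        (fun s : ℤ => lineL 0 1 (-s)) '' Icc (-j) (k + j)) := by
  ext L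
  simp only [gridLines, mem_union, mem_singleton_iff, mem_ofPred_eq, mem_insert_iff, mem_image,
    mem_Icc]
  aesop

theorem ncard_gridLines (k j : ℕ) : (gridLines k j).ncard = 2 * k + 4 * j + 3 := by
  have hvert : Function.Injective fun s : ℤ => lineL 1 0 (-s) :=
    (lineL_injective (by simp)).comp (neg_injective.comp Int.cast_injective)
  have hhoriz : Function.Injective fun s : ℤ => lineL 0 1 (-s) :=
    (lineL_injective (by simp)).comp (neg_injective.comp Int.cast_injective)
  have hdisj : Disjoint ((fun s : ℤ => lineL 1 0 (-s)) '' Icc (-j) (k + j))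
      ((fun s : ℤ => lineL 0 1 (-s)) '' Icc (-j) (k + j)) := by
    refine disjoint_left.2 ?_
    rintro _ ⟨s, -, rfl⟩ ⟨s', -, h⟩
    exact lineL_ne_lineL (by simp [cross_apply]) h.symm
  have hinf : lineL 0 0 1 ∉ (fun s : ℤ => lineL 1 0 (-s)) '' Icc (-j) (k + j) ∪
      (fun s : ℤ => lineL 0 1 (-s)) '' Icc (-j) (k + j) := by
    rintro (⟨s, -, h⟩ | ⟨s, -, h⟩) <;> exact lineL_ne_lineL (by simp [cross_apply]) h
  rw [gridLines_eq, ncard_insert_of_notMem hinf, ncard_union_eq hdisj,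
    ncard_image_of_injective _ hvert, ncard_image_of_injective _ hhoriz, ncard_Icc_int]
  omega

theorem lineL_one_one_notMem_gridLines (k j : ℕ) (c : ℝ) : lineL 1 1 c ∉ gridLines k j := by
  rw [gridLines_eq]
  rintro (h | ⟨s, -, h⟩ | ⟨s, -, h⟩)
  · exact lineL_ne_lineL (by simp [cross_apply]) h
  all_goals exact lineL_ne_lineL (by simp [cross_apply]) h.symm

theorem image_inf_gridLines {k j i : ℕ} (hi : i ≤ k + j) :
    (lineL 1 1 (-((k : ℝ) - i)) ⊓ ·) '' gridLines k j =
      insert (ℝ ∙ ![1, -1, 0])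
        ((fun t : ℤ => diagonalPoint ((k : ℝ) - i) t) '' Icc (-i - j) (k + j)) := by
  have hvert : (fun s : ℤ => lineL 1 1 (-((k : ℝ) - i)) ⊓ lineL 1 0 (-s)) =
      fun t : ℤ => diagonalPoint ((k : ℝ) - i) t :=
    funext fun s => lineL_one_one_inf_lineL_one_zero _ _
  have hhoriz : (fun s : ℤ => lineL 1 1 (-((k : ℝ) - i)) ⊓ lineL 0 1 (-s)) =
      (fun t : ℤ => diagonalPoint ((k : ℝ) - i) t) ∘ fun s => (k - i : ℤ) - s :=
    funext fun s => lineL_one_one_inf_lineL_zero_one (by push_cast; ring)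
  rw [gridLines_eq, image_insert_eq, image_union, image_image, image_image, hvert, hhoriz,
    image_comp, image_const_sub_Icc, ← image_union, lineL_one_one_inf_lineL_zero_zero_one,
    Icc_union_Icc' (by omega) (by omega), min_eq_right (by omega), max_eq_left (by omega)]
  congr 3
  ring

def innerDiagonals (k i : ℕ) : Set (Submodule ℝ (Fin 3 → ℝ)) :=
  (fun l : ℤ => lineL 1 1 (-((k : ℝ) - l + 1))) '' Icc 1 i

theorem ncard_innerDiagonals (k i : ℕ) : (innerDiagonals k i).ncard = i := by
  have hinj : Function.Injective fun l : ℤ => lineL 1 1 (-((k : ℝ) - l + 1)) := by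
    intro l l' h
    have := lineL_injective (by simp) h
    simp only [neg_inj, add_left_inj, sub_right_inj, Int.cast_inj] at this
    exact this
  rw [innerDiagonals, ncard_image_of_injective _ hinj, ncard_Icc_int]
  omega

theorem exists_eq_lineL_of_mem_innerDiagonals {k i : ℕ} {L : Submodule ℝ (Fin 3 → ℝ)}
    (hL : L ∈ innerDiagonals k i) : ∃ m' : ℝ, m' ≠ (k : ℝ) - i ∧ L = lineL 1 1 (-m') := by
  obtain ⟨l, hl, rfl⟩ := hL
  refine ⟨(k : ℝ) - l + 1, fun h => ?_, rfl⟩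
  have : (l : ℝ) = i + 1 := by linarith
  norm_cast at this
  exact absurd hl.2 (by omega)

theorem lineL_notMem_innerDiagonals (k i : ℕ) :
    lineL 1 1 (-((k : ℝ) - i)) ∉ innerDiagonals k i := by
  intro h
  obtain ⟨m', hm', heq⟩ := exists_eq_lineL_of_mem_innerDiagonals h
  exact hm' (neg_inj.1 (lineL_injective (by simp) heq)).symm

theorem image_inf_innerDiagonals_subset (k i : ℕ) :
    (lineL 1 1 (-((k : ℝ) - i)) ⊓ ·) '' innerDiagonals k i ⊆ {ℝ ∙ ![1, -1, 0]} := by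
  rintro _ ⟨L, hL, rfl⟩
  obtain ⟨m', hm', rfl⟩ := exists_eq_lineL_of_mem_innerDiagonals hL
  exact lineL_one_one_inf_lineL_one_one hm'.symm

theorem disjoint_gridLines_innerDiagonals (k j i : ℕ) :
    Disjoint (gridLines k j) (innerDiagonals k i) := by
  refine disjoint_left.2 fun L hL hL' => ?_
  obtain ⟨m', -, rfl⟩ := exists_eq_lineL_of_mem_innerDiagonals hL'
  exact lineL_one_one_notMem_gridLines k j _ hL

/-- Adding the diagonal line `H : x + y = (k-i)·z` to the arrangement
`A_i = grid ∪ {x+y = (k-l+1)·z, 1 ≤ l ≤ i}` creates `k+2j+2+i` intersection points on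
`H`, i.e. `t_{A_i ∪ {H}, H} = k+2j+1`. -/
theorem inner_diagonal_intersections (k j i : ℕ) (hi : i ≤ k + j) :
    let Ai : Set (Submodule ℝ (Fin 3 → ℝ)) :=
      gridLines k j ∪
        {L | ∃ l : ℤ, 1 ≤ l ∧ l ≤ (i : ℤ) ∧ L = lineL 1 1 (-((k : ℝ) - (l : ℝ) + 1))}
    let H := lineL 1 1 (-((k : ℝ) - (i : ℝ)))
    Ai.ncard = 2 * k + 4 * j + 3 + i ∧
    H ∉ Ai ∧
    ((fun K => H ⊓ K) '' Ai).ncard = k + 2 * j + 2 + i := by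
  intro Ai H
  have hAi : Ai = gridLines k j ∪ innerDiagonals k i := by
    ext L
    simp [Ai, innerDiagonals, eq_comm, and_assoc]
  have hpoints : (H ⊓ ·) '' Ai = insert (ℝ ∙ ![1, -1, 0])
      ((fun t : ℤ => diagonalPoint ((k : ℝ) - i) t) '' Icc (-i - j) (k + j)) := by
    rw [hAi, image_union, image_inf_gridLines hi, union_eq_left]
    exact (image_inf_innerDiagonals_subset k i).trans (singleton_subset_iff.2 (mem_insert _ _))
  refine ⟨?_, ?_, ?_⟩
  · rw [hAi, ncard_union_eq (disjoint_gridLines_innerDiagonals k j i)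
      (finite_of_ncard_ne_zero (by rw [ncard_gridLines]; omega)) ((finite_Icc _ _).image _),
      ncard_gridLines, ncard_innerDiagonals]
  · rw [hAi]
    exact not_or.2 ⟨lineL_one_one_notMem_gridLines k j _, lineL_notMem_innerDiagonals k i⟩
  · rw [hpoints, ncard_insert_of_notMem (by rintro ⟨t, -, h⟩; exact diagonalPoint_ne _ _ h),
      ncard_image_of_injective _ fun _ _ h => Int.cast_injective (diagonalPoint_injective _ h),
      ncard_Icc_int]
    omega
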